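/- Let ν be a probability measure on a space X, T: X → X measurable, and define μ_N = (1/N) ∑_{n=0}^{N−1} T^n_* ν. For a measurable set A ⊆ X and its complement B = X \ A, one has μ_N(A) ≤ ν(A) + (1/N) ∑_{i=1}^{N} i · ν({x ∈ B : |{n ∈ [0,N−1] : T^n x ∈ A}| = i}). Moreover, for any κ ∈ [0,1], the second term is at most κ + ν({x ∈ B : |{n ∈ [0,N−1] : T^n x ∈ A}| > κN}). -/

import Mathlib

open MeasureTheory
open scoped ENNReal Classical

/-!
Let `v x` be the number of visits of the orbit of `x` to `A` before time `N`. Then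
`∑_{n<N} (T^n_* ν)(A) = ∫ v dν`. On `A` one has `v ≤ N`, which accounts for the term `ν A`; on the
complement `B` the integral of the `ℕ`-valued function `v` is `∑ i ν(B ∩ {v = i})`. For the second
bound, `v ≤ κN` except on `{v > κN}`, where still `v ≤ N`.
-/

-- For `a = 0` or `a = ∞` the left side is `0`, since `0 * ∞ = 0`.
theorem ENNReal.inv_mul_cancel_left_le (a b : ℝ≥0∞) : a⁻¹ * (a * b) ≤ b := by
  rw [← mul_assoc]
  exact mul_le_of_le_one_left' (ENNReal.inv_mul_le_one a)

section

variable {X : Type*}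

noncomputable def visitCount (T : X → X) (A : Set X) (N : ℕ) (x : X) : ℕ :=
  ((Finset.range N).filter fun n => T^[n] x ∈ A).card

theorem visitCount_le (T : X → X) (A : Set X) (N : ℕ) (x : X) : visitCount T A N x ≤ N :=
  (Finset.card_filter_le _ _).trans_eq (Finset.card_range N)

theorem visitCount_eq_sum_indicator (T : X → X) (A : Set X) (N : ℕ) (x : X) :
    (visitCount T A N x : ℝ≥0∞) = ∑ n ∈ Finset.range N, (T^[n] ⁻¹' A).indicator 1 x := by
  rw [visitCount, Finset.card_filter]
  push_cast
  simp only [Set.indicator_apply, Set.mem_preimage, Pi.one_apply]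

variable [MeasurableSpace X]

theorem measurable_visitCount {T : X → X} (hT : Measurable T) {A : Set X} (hA : MeasurableSet A)
    (N : ℕ) : Measurable (visitCount T A N) := by
  unfold visitCount
  simp_rw [Finset.card_filter]
  exact Finset.measurable_sum _ fun n _ =>
    Measurable.ite (hT.iterate n hA) measurable_const measurable_const

theorem sum_map_iterate_apply_eq_lintegral_visitCount (μ : Measure X) {T : X → X}
    (hT : Measurable T) {A : Set X} (hA : MeasurableSet A) (N : ℕ) :
    ∑ n ∈ Finset.range N, μ.map T^[n] A = ∫⁻ x, (visitCount T A N x : ℝ≥0∞) ∂μ := by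
  simp_rw [visitCount_eq_sum_indicator]
  rw [lintegral_finsetSum _ fun n _ => measurable_one.indicator (hT.iterate n hA)]
  refine Finset.sum_congr rfl fun n _ => ?_
  rw [Measure.map_apply (hT.iterate n) hA, lintegral_indicator_one (hT.iterate n hA)]

theorem lintegral_natCast_eq_sum_Icc (μ : Measure X) {f : X → ℕ} (hf : Measurable f) {N : ℕ}
    (hfN : ∀ x, f x ≤ N) :
    ∫⁻ x, (f x : ℝ≥0∞) ∂μ = ∑ i ∈ Finset.Icc 1 N, (i : ℝ≥0∞) * μ {x | f x = i} := by
  rw [← lintegral_map (f := fun i : ℕ => (i : ℝ≥0∞)) measurable_from_nat hf,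
    lintegral_countable', tsum_eq_sum fun i hi => ?_]
  · refine Finset.sum_congr rfl fun i _ => ?_
    rw [Measure.map_apply hf (measurableSet_singleton i)]
    rfl
  rcases Nat.eq_zero_or_pos i with rfl | hpos
  · simp
  · have hempty : f ⁻¹' {i} = ∅ := Set.eq_empty_of_forall_notMem fun x hx =>
      hi (Finset.mem_Icc.2 ⟨hpos, hx ▸ hfN x⟩)
    simp [Measure.map_apply hf (measurableSet_singleton i), hempty]

theorem lintegral_natCast_le_mul_add_measure_gt (μ : Measure X) {f : X → ℕ} {N : ℕ}
    (hfN : ∀ x, f x ≤ N) (κ : ℝ) :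
    ∫⁻ x, (f x : ℝ≥0∞) ∂μ ≤ N * (ENNReal.ofReal κ * μ Set.univ + μ {x | κ * N < f x}) := by
  set G := {x | κ * N < (f x : ℝ)}
  have hpointwise : ∀ x,
      (f x : ℝ≥0∞) ≤ ENNReal.ofReal κ * N + G.indicator (fun _ => (N : ℝ≥0∞)) x := by
    intro x
    by_cases hx : x ∈ G
    · rw [Set.indicator_of_mem hx]
      exact (Nat.cast_le.2 (hfN x)).trans le_add_self
    · calc (f x : ℝ≥0∞) = ENNReal.ofReal (f x) := (ENNReal.ofReal_natCast _).symm
        _ ≤ ENNReal.ofReal (κ * N) := ENNReal.ofReal_le_ofReal (not_lt.1 hx)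
        _ = ENNReal.ofReal κ * N := by
          rw [ENNReal.ofReal_mul' N.cast_nonneg, ENNReal.ofReal_natCast]
        _ ≤ _ := le_self_add
  calc ∫⁻ x, (f x : ℝ≥0∞) ∂μ
      ≤ ∫⁻ x, (ENNReal.ofReal κ * N + G.indicator (fun _ => (N : ℝ≥0∞)) x) ∂μ :=
        lintegral_mono hpointwise
    _ = ENNReal.ofReal κ * N * μ Set.univ + ∫⁻ x, G.indicator (fun _ => (N : ℝ≥0∞)) x ∂μ := by
      rw [lintegral_add_left measurable_const, lintegral_const]
    _ ≤ ENNReal.ofReal κ * N * μ Set.univ + N * μ G := by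
      gcongr
      exact lintegral_indicator_const_le _ _
    _ = _ := by ring

end

theorem stmt_17_general {X : Type*} [MeasurableSpace X]
    (ν : Measure X) [IsProbabilityMeasure ν]
    (T : X → X) (hT : Measurable T)
    (A : Set X) (hA : MeasurableSet A)
    (N : ℕ) (κ : ℝ) :
    ((N : ℝ≥0∞)⁻¹ * ∑ n ∈ Finset.range N, (Measure.map T^[n] ν) A
        ≤ ν A + (N : ℝ≥0∞)⁻¹ * ∑ i ∈ Finset.Icc 1 N, (i : ℝ≥0∞) *
            ν {x ∈ Aᶜ | ((Finset.range N).filter fun n => T^[n] x ∈ A).card = i}) ∧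
      (N : ℝ≥0∞)⁻¹ * ∑ i ∈ Finset.Icc 1 N, (i : ℝ≥0∞) *
            ν {x ∈ Aᶜ | ((Finset.range N).filter fun n => T^[n] x ∈ A).card = i}
        ≤ ENNReal.ofReal κ +
          ν {x ∈ Aᶜ | κ * N < (((Finset.range N).filter fun n => T^[n] x ∈ A).card : ℝ)} := by
  simp only [← visitCount.eq_1]
  have hv := measurable_visitCount hT hA N
  have hB : ∫⁻ x in Aᶜ, (visitCount T A N x : ℝ≥0∞) ∂ν
      = ∑ i ∈ Finset.Icc 1 N, (i : ℝ≥0∞) * ν {x ∈ Aᶜ | visitCount T A N x = i} := by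
    rw [lintegral_natCast_eq_sum_Icc _ hv (visitCount_le T A N)]
    refine Finset.sum_congr rfl fun i _ => ?_
    rw [Measure.restrict_apply' hA.compl, Set.inter_comm]
    rfl
  rw [← hB]
  constructor
  · have hA_le : ∫⁻ x in A, (visitCount T A N x : ℝ≥0∞) ∂ν ≤ N * ν A :=
      (setLIntegral_mono measurable_const fun x _ => Nat.cast_le.2 (visitCount_le T A N x)).trans
        (setLIntegral_const A _).le
    rw [sum_map_iterate_apply_eq_lintegral_visitCount ν hT hA, ← lintegral_add_compl _ hA, mul_add]
    gcongr
    exact (mul_le_mul_right hA_le _).trans (ENNReal.inv_mul_cancel_left_le _ _)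
  · have hmarkov :=
      lintegral_natCast_le_mul_add_measure_gt (ν.restrict Aᶜ) (visitCount_le T A N) κ
    rw [Measure.restrict_apply_univ, Measure.restrict_apply' hA.compl, Set.inter_comm] at hmarkov
    calc _ ≤ ENNReal.ofReal κ * ν Aᶜ + ν {x ∈ Aᶜ | κ * N < (visitCount T A N x : ℝ)} :=
          (mul_le_mul_right hmarkov _).trans (ENNReal.inv_mul_cancel_left_le _ _)
      _ ≤ _ := by
        gcongr
        exact mul_le_of_le_one_right' prob_le_one

theorem stmt_17 {X : Type*} [MeasurableSpace X]
    (ν : Measure X) [IsProbabilityMeasure ν]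
    (T : X → X) (hT : Measurable T)
    (A : Set X) (hA : MeasurableSet A)
    (N : ℕ) (hN : 0 < N) (κ : ℝ) (hκ0 : 0 ≤ κ) (hκ1 : κ ≤ 1) :
    ((N : ℝ≥0∞)⁻¹ * ∑ n ∈ Finset.range N, (Measure.map T^[n] ν) A
        ≤ ν A + (N : ℝ≥0∞)⁻¹ * ∑ i ∈ Finset.Icc 1 N, (i : ℝ≥0∞) *
            ν {x ∈ Aᶜ | ((Finset.range N).filter fun n => T^[n] x ∈ A).card = i}) ∧
      (N : ℝ≥0∞)⁻¹ * ∑ i ∈ Finset.Icc 1 N, (i : ℝ≥0∞) *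
            ν {x ∈ Aᶜ | ((Finset.range N).filter fun n => T^[n] x ∈ A).card = i}
        ≤ ENNReal.ofReal κ +
          ν {x ∈ Aᶜ | κ * N < (((Finset.range N).filter fun n => T^[n] x ∈ A).card : ℝ)} :=
  stmt_17_general ν T hT A hA N κ
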